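/- In the Generalized Geography graph produced by the standard reduction from a Formula Game instance ∃v₁∀v₂…∃vₙ ψ (diamond chain for quantifiers, clause nodes, literal nodes, and back-edges from literal nodes to diamond nodes), Player 1 has a winning strategy if and only if the formula ∃v₁∀v₂…∃vₙ ψ is true. -/
import Mathlib


/-- Generalized Geography.  A position consists of the set `M` of marked nodes and the
node `v` currently holding the token (always `v ∈ M` in actual play).  `MoverWins E M v`
says that the player to move has a winning strategy: there is a legal move `v → w`
(along an edge of `E`, to an unmarked node `w`, which becomes marked) such that every
legal answer of the opponent leads to a position where the original player, again to
move, wins.  In particular if the opponent is then stuck, the condition holds vacuously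
and the mover wins.  A player unable to move loses, so `¬ MoverWins E M v` with no legal
move available means the mover loses immediately. -/
inductive MoverWins {V : Type} [DecidableEq V] (E : V → V → Prop) :
    Finset V → V → Prop where
  | intro (M : Finset V) (v w : V) (hE : E v w) (hw : w ∉ M)
      (h : ∀ u, E w u → u ∉ insert w M → MoverWins E (insert u (insert w M)) u) :
      MoverWins E M v

/-- `Legal E M v L` : starting from marked set `M` with the token on `v`, the successive
moves recorded in the list `L` are all legal geography moves. -/
def Legal {V : Type} [DecidableEq V] (E : V → V → Prop) : Finset V → V → List V → Prop
  | _, _, [] => True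
  | M, v, w :: L => E v w ∧ w ∉ M ∧ Legal E (insert w M) w L

/-- A literal: a variable index together with its sign (`true` = positive). -/
abbrev Lit := ℕ × Bool
/-- A CNF formula: a list of clauses, each a list of literals. -/
abbrev CNF := List (List Lit)

def litEval (σ : ℕ → Bool) (l : Lit) : Bool := if l.2 then σ l.1 else !σ l.1

/-- Truth of the quantified formula `∃v₀ ∀v₁ ∃v₂ … ψ` (quantifiers strictly alternating,
existential on even indices) over the variables `i, i+1, …, n-1`, with `σ` recording the
values already chosen for `v₀, …, v_{i-1}`; `ψ` is the CNF `cnf`. -/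
def QTrue (cnf : CNF) (n : ℕ) : ℕ → (ℕ → Bool) → Prop
  | i, σ =>
    if h : i < n then
      if i % 2 = 0 then ∃ b, QTrue cnf n (i + 1) (Function.update σ i b)
      else ∀ b : Bool, QTrue cnf n (i + 1) (Function.update σ i b)
    else ∀ c ∈ cnf, ∃ l ∈ c, litEval σ l = true
  termination_by i _ => n - i
  decreasing_by all_goals omega

/-- Nodes of the Generalized Geography graph of the standard reduction: for each variable
`vᵢ` a diamond with entry node `entry i`, truth-value nodes `tv i true` / `tv i false`
and exit node `exitN i`; the node `entry n` is the node `C` reached after the last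
diamond; one node `clause j` per clause and one node `lit j k` per literal occurrence. -/
inductive GNode where
  | entry : ℕ → GNode
  | tv : ℕ → Bool → GNode
  | exitN : ℕ → GNode
  | clause : ℕ → GNode
  | lit : ℕ → ℕ → GNode
deriving DecidableEq

/-- Edges of the reduction graph: within each diamond `entry i → tv i b → exitN i`;
diamonds chained by `exitN i → entry (i+1)`; from `C = entry n` an edge to each clause
node; from each clause node an edge to each of its literal nodes; and from the node of a
literal `(v, s)` a single back-edge to the diamond node `tv v s`. -/
inductive GEdge (n : ℕ) (cnf : CNF) : GNode → GNode → Prop where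
  | choose (i : ℕ) (b : Bool) (h : i < n) : GEdge n cnf (.entry i) (.tv i b)
  | toExit (i : ℕ) (b : Bool) (h : i < n) : GEdge n cnf (.tv i b) (.exitN i)
  | next (i : ℕ) (h : i < n) : GEdge n cnf (.exitN i) (.entry (i + 1))
  | toClause (j : ℕ) (h : j < cnf.length) : GEdge n cnf (.entry n) (.clause j)
  | toLit (j k : ℕ) (hj : j < cnf.length) (hk : k < (cnf.getD j []).length) :
      GEdge n cnf (.clause j) (.lit j k)
  | back (j k : ℕ) (hj : j < cnf.length) (hk : k < (cnf.getD j []).length) :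
      GEdge n cnf (.lit j k)
        (.tv ((cnf.getD j []).getD k (0, true)).1 ((cnf.getD j []).getD k (0, true)).2)

section Aux

variable {V : Type} [DecidableEq V]

lemma moverWins_iff (E : V → V → Prop) (M : Finset V) (v : V) :
    MoverWins E M v ↔ ∃ w, E v w ∧ w ∉ M ∧
      ∀ u, E w u → u ∉ insert w M → MoverWins E (insert u (insert w M)) u := by
  constructor
  · rintro ⟨_, _, w, hE, hw, h⟩; exact ⟨w, hE, hw, h⟩
  · rintro ⟨w, hE, hw, h⟩; exact ⟨M, v, w, hE, hw, h⟩

end Aux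

/-- The set of nodes marked when the token reaches `entry i` with values `σ`. -/
def MSet (σ : ℕ → Bool) (i : ℕ) : Finset GNode :=
  ((Finset.range (i+1)).image GNode.entry) ∪
  ((Finset.range i).image (fun j => GNode.tv j (σ j))) ∪
  ((Finset.range i).image GNode.exitN)

lemma mem_MSet {σ : ℕ → Bool} {i : ℕ} {x : GNode} : x ∈ MSet σ i ↔
    (∃ j, j ≤ i ∧ x = GNode.entry j) ∨ (∃ j, j < i ∧ x = GNode.tv j (σ j)) ∨
      (∃ j, j < i ∧ x = GNode.exitN j) := by
  simp only [MSet, Finset.mem_union, Finset.mem_image, Finset.mem_range, Nat.lt_succ_iff]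
  constructor
  · rintro ((⟨j,hj,rfl⟩|⟨j,hj,rfl⟩)|⟨j,hj,rfl⟩)
    · exact Or.inl ⟨j, hj, rfl⟩
    · exact Or.inr (Or.inl ⟨j, hj, rfl⟩)
    · exact Or.inr (Or.inr ⟨j, hj, rfl⟩)
  · rintro (⟨j,hj,rfl⟩|⟨j,hj,rfl⟩|⟨j,hj,rfl⟩)
    · exact Or.inl (Or.inl ⟨j, hj, rfl⟩)
    · exact Or.inl (Or.inr ⟨j, hj, rfl⟩)
    · exact Or.inr ⟨j, hj, rfl⟩

lemma MSet_step (σ : ℕ → Bool) (i : ℕ) (b : Bool) :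
    MSet (Function.update σ i b) (i+1) =
      insert (GNode.entry (i+1)) (insert (GNode.exitN i)
        (insert (GNode.tv i b) (MSet σ i))) := by
  ext x
  simp only [Finset.mem_insert, mem_MSet]
  constructor
  · rintro (⟨j,hj,rfl⟩|⟨j,hj,rfl⟩|⟨j,hj,rfl⟩)
    · rcases Nat.eq_or_lt_of_le hj with rfl | hj
      · exact Or.inl rfl
      · exact Or.inr (Or.inr (Or.inr (Or.inl ⟨j, by omega, rfl⟩)))
    · rcases Nat.lt_succ_iff_lt_or_eq.mp hj with hj | rfl
      · refine Or.inr (Or.inr (Or.inr (Or.inr (Or.inl ⟨j, hj, ?_⟩))))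
        rw [Function.update_of_ne (by omega)]
      · rw [Function.update_self]; exact Or.inr (Or.inr (Or.inl rfl))
    · rcases Nat.lt_succ_iff_lt_or_eq.mp hj with hj | rfl
      · exact Or.inr (Or.inr (Or.inr (Or.inr (Or.inr ⟨j, hj, rfl⟩))))
      · exact Or.inr (Or.inl rfl)
  · rintro (rfl|rfl|rfl|⟨j,hj,rfl⟩|⟨j,hj,rfl⟩|⟨j,hj,rfl⟩)
    · exact Or.inl ⟨i+1, le_rfl, rfl⟩
    · exact Or.inr (Or.inr ⟨i, by omega, rfl⟩)
    · refine Or.inr (Or.inl ⟨i, by omega, ?_⟩); rw [Function.update_self]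
    · exact Or.inl ⟨j, by omega, rfl⟩
    · refine Or.inr (Or.inl ⟨j, by omega, ?_⟩); rw [Function.update_of_ne (by omega)]
    · exact Or.inr (Or.inr ⟨j, by omega, rfl⟩)

lemma QTrue_even {cnf : CNF} {n i : ℕ} (h : i < n) (he : i % 2 = 0) (σ : ℕ → Bool) :
    QTrue cnf n i σ ↔ ∃ b, QTrue cnf n (i+1) (Function.update σ i b) := by
  rw [QTrue]; simp [h, he]

lemma QTrue_odd {cnf : CNF} {n i : ℕ} (h : i < n) (he : i % 2 = 1) (σ : ℕ → Bool) :
    QTrue cnf n i σ ↔ ∀ b : Bool, QTrue cnf n (i+1) (Function.update σ i b) := by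
  rw [QTrue]; simp [h, he]

lemma QTrue_base {cnf : CNF} {n i : ℕ} (h : ¬ i < n) (σ : ℕ → Bool) :
    QTrue cnf n i σ ↔ ∀ c ∈ cnf, ∃ l ∈ c, litEval σ l = true := by
  rw [QTrue]; simp [h]

lemma cnf_index_iff (cnf : CNF) (σ : ℕ → Bool) :
    (∀ c ∈ cnf, ∃ l ∈ c, litEval σ l = true) ↔
      ∀ j, j < cnf.length → ∃ k, k < (cnf.getD j []).length ∧
        litEval σ ((cnf.getD j []).getD k (0, true)) = true := by
  constructor
  · intro h j hj
    have hm : cnf.getD j [] ∈ cnf := by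
      rw [List.getD_eq_getElem _ _ hj]; exact List.getElem_mem _
    obtain ⟨l, hl, hP⟩ := h _ hm
    obtain ⟨k, hk, rfl⟩ := List.mem_iff_getElem.mp hl
    exact ⟨k, hk, by rwa [List.getD_eq_getElem _ _ hk]⟩
  · intro h c hc
    obtain ⟨j, hj, rfl⟩ := List.mem_iff_getElem.mp hc
    obtain ⟨k, hk, hP⟩ := h j hj
    rw [List.getD_eq_getElem _ _ hj] at hk hP
    rw [List.getD_eq_getElem _ _ hk] at hP
    exact ⟨_, List.getElem_mem _, hP⟩

lemma entry_mem_MSet {σ : ℕ → Bool} {i j : ℕ} : GNode.entry j ∈ MSet σ i ↔ j ≤ i := by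
  rw [mem_MSet]
  constructor
  · rintro (⟨a, ha, h⟩ | ⟨a, ha, h⟩ | ⟨a, ha, h⟩) <;> simp_all
  · intro h; exact Or.inl ⟨j, h, rfl⟩

lemma tv_mem_MSet {σ : ℕ → Bool} {i j : ℕ} {b : Bool} :
    GNode.tv j b ∈ MSet σ i ↔ j < i ∧ b = σ j := by
  rw [mem_MSet]
  constructor
  · rintro (⟨a, ha, h⟩ | ⟨a, ha, h⟩ | ⟨a, ha, h⟩) <;> simp_all
  · rintro ⟨h, rfl⟩; exact Or.inr (Or.inl ⟨j, h, rfl⟩)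

lemma exitN_mem_MSet {σ : ℕ → Bool} {i j : ℕ} : GNode.exitN j ∈ MSet σ i ↔ j < i := by
  rw [mem_MSet]
  constructor
  · rintro (⟨a, ha, h⟩ | ⟨a, ha, h⟩ | ⟨a, ha, h⟩) <;> simp_all
  · intro h; exact Or.inr (Or.inr ⟨j, h, rfl⟩)

lemma clause_notMem_MSet {σ : ℕ → Bool} {i j : ℕ} : GNode.clause j ∉ MSet σ i := by
  rw [mem_MSet]
  rintro (⟨a, ha, h⟩ | ⟨a, ha, h⟩ | ⟨a, ha, h⟩) <;> simp_all

lemma lit_notMem_MSet {σ : ℕ → Bool} {i j k : ℕ} : GNode.lit j k ∉ MSet σ i := by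
  rw [mem_MSet]
  rintro (⟨a, ha, h⟩ | ⟨a, ha, h⟩ | ⟨a, ha, h⟩) <;> simp_all

lemma litEval_iff (σ : ℕ → Bool) (l : Lit) : litEval σ l = true ↔ σ l.1 = l.2 := by
  rcases l with ⟨v, s⟩; cases s <;> simp [litEval]

/-- A `tv` node whose exit node is already marked is a dead end for the mover. -/
lemma tv_dead {n : ℕ} {cnf : CNF} {M : Finset GNode} {v : ℕ} {s : Bool}
    (hv : GNode.exitN v ∈ M) : ¬ MoverWins (GEdge n cnf) M (GNode.tv v s) := by
  rintro ⟨_, _, w, hE, hw, -⟩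
  cases hE
  exact hw hv

/-- The clause gadget: from a clause node the mover wins iff the clause contains a
literal that is true under the assignment recorded in the marked set. -/
lemma clause_win {n : ℕ} {cnf : CNF} (hvars : ∀ c ∈ cnf, ∀ l ∈ c, l.1 < n)
    (σ : ℕ → Bool) (j : ℕ) (hj : j < cnf.length) :
    MoverWins (GEdge n cnf) (insert (GNode.clause j) (MSet σ n)) (GNode.clause j) ↔
      ∃ k, k < (cnf.getD j []).length ∧
        litEval σ ((cnf.getD j []).getD k (0, true)) = true := by
  have hlit : ∀ k, k < (cnf.getD j []).length → ((cnf.getD j []).getD k (0, true)).1 < n := by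
    intro k hk
    refine hvars (cnf.getD j []) ?_ _ ?_
    · rw [List.getD_eq_getElem _ _ hj]; exact List.getElem_mem _
    · rw [List.getD_eq_getElem _ _ hk]; exact List.getElem_mem _
  rw [moverWins_iff]
  constructor
  · rintro ⟨w, hE, hw, h⟩
    cases hE with
    | toLit j' k hj' hk =>
      refine ⟨k, hk, ?_⟩
      by_contra hf
      have hne : ¬ σ ((cnf.getD j []).getD k (0, true)).1 = ((cnf.getD j []).getD k (0, true)).2 :=
        fun hh => hf ((litEval_iff σ _).mpr hh)
      have hmem : GNode.tv ((cnf.getD j []).getD k (0, true)).1 ((cnf.getD j []).getD k (0, true)).2 ∉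
          insert (GNode.lit j k) (insert (GNode.clause j) (MSet σ n)) := by
        intro hx
        rcases Finset.mem_insert.mp hx with h1 | hx
        · simp at h1
        rcases Finset.mem_insert.mp hx with h1 | hx
        · simp at h1
        rcases mem_MSet.mp hx with ⟨a, ha, h1⟩ | ⟨a, ha, h1⟩ | ⟨a, ha, h1⟩
        · simp at h1
        · injection h1 with h1 h2
          exact hne (by rw [h1]; exact h2.symm)
        · simp at h1
      have hdead := h _ (GEdge.back j k hj' hk) hmem
      refine tv_dead ?_ hdead
      refine Finset.mem_insert_of_mem (Finset.mem_insert_of_mem (Finset.mem_insert_of_mem ?_))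
      exact mem_MSet.mpr (Or.inr (Or.inr ⟨_, hlit k hk, rfl⟩))
  · rintro ⟨k, hk, hP⟩
    refine ⟨GNode.lit j k, GEdge.toLit j k hj hk, ?_, ?_⟩
    · intro hx
      rcases Finset.mem_insert.mp hx with h1 | hx
      · simp at h1
      rcases mem_MSet.mp hx with ⟨a, ha, h1⟩ | ⟨a, ha, h1⟩ | ⟨a, ha, h1⟩ <;> simp at h1
    · intro u hu hmem
      cases hu with
      | back j' k' hj' hk' =>
        exfalso; apply hmem
        have hs := (litEval_iff σ _).mp hP
        refine Finset.mem_insert_of_mem (Finset.mem_insert_of_mem ?_)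
        exact mem_MSet.mpr (Or.inr (Or.inl ⟨_, hlit k hk, by rw [hs]⟩))

/-- Key invariant: with the token on `entry i` (`i` even, i.e. it is the ∃-player's
turn) and the marked set recording the chain traversed so far with choices `σ`, the
mover wins iff the remaining quantified formula is true. -/
lemma key (n : ℕ) (cnf : CNF) (hn : Odd n) (hvars : ∀ c ∈ cnf, ∀ l ∈ c, l.1 < n) :
    ∀ K i σ, n - i ≤ K → i % 2 = 0 → i < n →
      (MoverWins (GEdge n cnf) (MSet σ i) (GNode.entry i) ↔ QTrue cnf n i σ) := by
  have hnodd : n % 2 = 1 := Nat.odd_iff.mp hn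
  intro K
  induction K with
  | zero => intro i σ hK he hi; omega
  | succ K ih =>
    intro i σ hK he hi
    -- plies 1–2: entry i → tv i b (mover's choice of b) → exitN i (forced)
    have step1 : MoverWins (GEdge n cnf) (MSet σ i) (GNode.entry i) ↔
        ∃ b, MoverWins (GEdge n cnf)
          (insert (GNode.exitN i) (insert (GNode.tv i b) (MSet σ i))) (GNode.exitN i) := by
      rw [moverWins_iff]
      constructor
      · rintro ⟨w, hE, hw, h⟩
        cases hE with
        | choose i' b hb =>
          refine ⟨b, h (GNode.exitN i) (GEdge.toExit i b hi) ?_⟩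
          simp [Finset.mem_insert, exitN_mem_MSet]
        | toClause j hj => omega
      · rintro ⟨b, hb⟩
        refine ⟨GNode.tv i b, GEdge.choose i b hi, ?_, ?_⟩
        · simp [tv_mem_MSet]
        · intro u hu hmem
          cases hu with
          | toExit i' b' h' => exact hb
    by_cases hlast : i + 1 = n
    · -- base case: i = n - 1, the next entry node is C = entry n
      obtain rfl : n = i + 1 := hlast.symm
      -- plies 3–4: exitN i → entry (i+1) = C (forced) → clause j (opponent's choice)
      have step2 : ∀ b, MoverWins (GEdge (i+1) cnf)
          (insert (GNode.exitN i) (insert (GNode.tv i b) (MSet σ i))) (GNode.exitN i) ↔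
          ∀ j, j < cnf.length → MoverWins (GEdge (i+1) cnf)
            (insert (GNode.clause j) (MSet (Function.update σ i b) (i+1))) (GNode.clause j) := by
        intro b
        rw [moverWins_iff, MSet_step σ i b]
        constructor
        · rintro ⟨w, hE, hw, h⟩
          cases hE with
          | next i' h' =>
            intro j hj
            refine h (GNode.clause j) (GEdge.toClause j hj) ?_
            simp [Finset.mem_insert, clause_notMem_MSet]
        · intro h
          refine ⟨GNode.entry (i+1), GEdge.next i hi, ?_, ?_⟩
          · simp only [Finset.mem_insert, entry_mem_MSet]
            simp
          · intro u hu hmem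
            cases hu with
            | choose i' b' h' => omega
            | toClause j hj => exact h j hj
      have hq : QTrue cnf (i+1) i σ ↔
          ∃ b, ∀ j, j < cnf.length → ∃ k, k < (cnf.getD j []).length ∧
            litEval (Function.update σ i b) ((cnf.getD j []).getD k (0, true)) = true := by
        rw [QTrue_even hi he]
        refine exists_congr fun b => ?_
        rw [QTrue_base (by omega), cnf_index_iff]
      rw [step1, hq]
      refine exists_congr fun b => ?_
      rw [step2 b]
      refine forall_congr' fun j => forall_congr' fun hj => ?_
      exact clause_win hvars (Function.update σ i b) j hj
    · -- inductive step: i + 1 < n, full diamond for variable i+1 follows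
      have hnext : i + 1 < n := by omega
      -- plies 3–4: exitN i → entry (i+1) (forced) → tv (i+1) b' (opponent's choice)
      have step2 : ∀ b, MoverWins (GEdge n cnf)
          (insert (GNode.exitN i) (insert (GNode.tv i b) (MSet σ i))) (GNode.exitN i) ↔
          ∀ b' : Bool, MoverWins (GEdge n cnf)
            (insert (GNode.tv (i+1) b') (MSet (Function.update σ i b) (i+1)))
            (GNode.tv (i+1) b') := by
        intro b
        rw [moverWins_iff, MSet_step σ i b]
        constructor
        · rintro ⟨w, hE, hw, h⟩
          cases hE with
          | next i' h' =>
            intro b'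
            refine h (GNode.tv (i+1) b') (GEdge.choose (i+1) b' hnext) ?_
            simp only [Finset.mem_insert, tv_mem_MSet]
            simp
        · intro h
          refine ⟨GNode.entry (i+1), GEdge.next i hi, ?_, ?_⟩
          · simp only [Finset.mem_insert, entry_mem_MSet]
            simp
          · intro u hu hmem
            cases hu with
            | choose i' b' h' => exact h b'
            | toClause j hj => omega
      -- plies 5–6: tv (i+1) b' → exitN (i+1) (forced) → entry (i+2) (forced)
      have step3 : ∀ b b', MoverWins (GEdge n cnf)
          (insert (GNode.tv (i+1) b') (MSet (Function.update σ i b) (i+1)))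
          (GNode.tv (i+1) b') ↔
          MoverWins (GEdge n cnf)
            (MSet (Function.update (Function.update σ i b) (i+1) b') (i+2))
            (GNode.entry (i+2)) := by
        intro b b'
        rw [moverWins_iff, MSet_step (Function.update σ i b) (i+1) b']
        constructor
        · rintro ⟨w, hE, hw, h⟩
          cases hE with
          | toExit i' bb h' =>
            refine h (GNode.entry (i+2)) (GEdge.next (i+1) hnext) ?_
            simp only [Finset.mem_insert, entry_mem_MSet]
            simp
        · intro h
          refine ⟨GNode.exitN (i+1), GEdge.toExit (i+1) b' hnext, ?_, ?_⟩
          · simp only [Finset.mem_insert, exitN_mem_MSet]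
            simp
          · intro u hu hmem
            cases hu with
            | next i' h' => exact h
      have hii : i + 2 < n := by omega
      rw [step1, QTrue_even hi he]
      refine exists_congr fun b => ?_
      rw [step2 b, QTrue_odd hnext (by omega)]
      refine forall_congr' fun b' => ?_
      rw [step3 b b']
      exact ih (i+2) _ (by omega) (by omega) hii

/-- in the Generalized Geography graph produced by the standard reduction
from a Formula Game instance `∃v₀∀v₁…∃v_{n-1} ψ` (diamond chain for the quantifiers,
clause nodes, literal nodes, and back-edges from literal nodes to diamond nodes), where
`n` is odd (so the alternating prefix starts and ends with `∃`) and all variables of the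
CNF `ψ` are among `v₀, …, v_{n-1}`, Player 1 — moving first from the start node and
simulating the ∃-player — has a winning strategy iff the formula is true. -/
theorem geography_reduction_correct (n : ℕ) (hn : Odd n) (cnf : CNF)
    (hvars : ∀ c ∈ cnf, ∀ l ∈ c, l.1 < n) :
    MoverWins (GEdge n cnf) {GNode.entry 0} (GNode.entry 0) ↔
      QTrue cnf n 0 (fun _ => false) := by
  have hpos : 0 < n := by
    have := Nat.odd_iff.mp hn; omega
  have hM : ({GNode.entry 0} : Finset GNode) = MSet (fun _ => false) 0 := by
    ext x
    simp [mem_MSet]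
  rw [hM]
  exact key n cnf hn hvars n 0 _ (by omega) rfl hpos
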